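/- Let {M_k} be a POVM on a finite-dimensional Hilbert space H with success probability P = Σ_k Tr(M_k ρ_k) > 0 for an ensemble {ρ_k} of positive semidefinite operators with Σ Tr ρ_k = 1. Then there exist operators E_k with M_k = E_k† E_k and Σ_k Tr(E_k ρ_k) real, satisfying Σ_k Tr(E_k ρ_k) ≥ P. -/

import Mathlib

open Matrix ComplexOrder
open scoped MatrixOrder

/-!
Take `E_k = √M_k`. Since `0 ≤ M_k ≤ 1`, functional calculus with `x ≤ √x` on `[0, 1]`
gives `M_k ≤ √M_k`. Pairing against `ρ_k ≥ 0` is monotone, because the trace of a product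
of two positive semidefinite matrices is a nonnegative real; hence every `Tr(√M_k ρ_k)`
is real and dominates `Tr(M_k ρ_k)`.
-/

namespace CFC

variable {A : Type*} [PartialOrder A] [Ring A] [StarRing A] [TopologicalSpace A]
  [StarOrderedRing A] [Algebra ℝ A] [ContinuousFunctionalCalculus ℝ A IsSelfAdjoint]
  [NonnegSpectrumClass ℝ A] [IsSemitopologicalRing A] [T2Space A]

lemma self_le_sqrt_of_le_one {a : A} (ha₀ : 0 ≤ a) (ha₁ : a ≤ 1) : a ≤ sqrt a := by
  rw [sqrt_eq_real_sqrt a, cfcₙ_eq_cfc]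
  conv_lhs => rw [← cfc_id ℝ a]
  refine cfc_mono fun x hx => ?_
  have hx₀ : 0 ≤ x := spectrum_nonneg_of_nonneg ha₀ hx
  have hx₁ : x ≤ 1 := (CFC.le_one_iff a).1 ha₁ x hx
  exact (Real.le_sqrt hx₀ hx₀).2 (pow_le_of_le_one hx₀ hx₁ two_ne_zero)

end CFC

namespace Matrix

variable {n 𝕜 : Type*} [Fintype n] [DecidableEq n] [RCLike 𝕜]

lemma PosSemidef.trace_mul_nonneg {A B : Matrix n n 𝕜} (hA : A.PosSemidef)
    (hB : B.PosSemidef) : 0 ≤ (A * B).trace := by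
  obtain ⟨C, rfl⟩ := CStarAlgebra.nonneg_iff_eq_star_mul_self.mp hB.nonneg
  rw [← Matrix.mul_assoc, trace_mul_cycle, star_eq_conjTranspose]
  exact (hA.mul_mul_conjTranspose_same C).trace_nonneg

lemma trace_mul_le_trace_mul_of_le {A B ρ : Matrix n n 𝕜} (hAB : A ≤ B)
    (hρ : ρ.PosSemidef) : (A * ρ).trace ≤ (B * ρ).trace := by
  simpa [sub_mul] using (le_iff.1 hAB).trace_mul_nonneg hρ

end Matrix

theorem exists_generalized_measurement_small_angle_general
    {n K : Type*} [Fintype n] [DecidableEq n] [Fintype K]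
    (ρ : K → Matrix n n ℂ) (hρ : ∀ k, (ρ k).PosSemidef)
    (M : K → Matrix n n ℂ) (hM : ∀ k, (M k).PosSemidef)
    (hMsum : ((1 : Matrix n n ℂ) - ∑ k, M k).PosSemidef) :
    ∃ E : K → Matrix n n ℂ,
      (∀ k, (E k)ᴴ * (E k) = M k) ∧
      (∑ k, ((E k) * (ρ k)).trace).im = 0 ∧
      (∑ k, ((M k) * (ρ k)).trace).re ≤ (∑ k, ((E k) * (ρ k)).trace).re := by
  have hM_le_one (k : K) : M k ≤ 1 :=
    (Finset.single_le_sum (fun j _ => (hM j).nonneg) (Finset.mem_univ k)).trans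
      (sub_nonneg.1 hMsum.nonneg)
  refine ⟨fun k => CFC.sqrt (M k), fun k => ?_, ?_, ?_⟩
  · rw [← star_eq_conjTranspose, (CFC.sqrt_nonneg (M k)).isSelfAdjoint.star_eq,
      CFC.sqrt_mul_sqrt_self _ (hM k).nonneg]
  · have hsum_nonneg : 0 ≤ ∑ k, (CFC.sqrt (M k) * ρ k).trace :=
      Finset.sum_nonneg fun k _ => (CFC.sqrt_nonneg (M k)).posSemidef.trace_mul_nonneg (hρ k)
    exact (Complex.le_def.1 hsum_nonneg).2.symm
  · refine (Complex.le_def.1 (Finset.sum_le_sum fun k _ => ?_)).1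
    exact trace_mul_le_trace_mul_of_le
      (CFC.self_le_sqrt_of_le_one (hM k).nonneg (hM_le_one k)) (hρ k)

/-- Small-angle lemma for measurements: for any POVM `{M_k}` with positive success
probability `P = Σ Tr(M_k ρ_k)` on an ensemble of positive semidefinite operators
with `Σ Tr ρ_k = 1`, there is a generalized measurement decomposition
`M_k = E_kᴴ E_k` such that `Σ Tr(E_k ρ_k)` is real and at least `P`. -/
theorem exists_generalized_measurement_small_angle
    {n K : Type*} [Fintype n] [DecidableEq n] [Fintype K]
    (ρ : K → Matrix n n ℂ) (hρ : ∀ k, (ρ k).PosSemidef)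
    (hnorm : (∑ k, (ρ k).trace) = 1)
    (M : K → Matrix n n ℂ) (hM : ∀ k, (M k).PosSemidef)
    (hMsum : ((1 : Matrix n n ℂ) - ∑ k, M k).PosSemidef)
    (hpos : 0 < (∑ k, ((M k) * (ρ k)).trace).re) :
    ∃ E : K → Matrix n n ℂ,
      (∀ k, (E k)ᴴ * (E k) = M k) ∧
      (∑ k, ((E k) * (ρ k)).trace).im = 0 ∧
      (∑ k, ((M k) * (ρ k)).trace).re ≤ (∑ k, ((E k) * (ρ k)).trace).re :=
  exists_generalized_measurement_small_angle_general ρ hρ M hM hMsum
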